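/- Every partial sum of the sequence (θ_m) is strictly positive: Σ_{m=0}^{n} θ_m > 0 for every integer n ≥ 0. -/

import Mathlib

/-!
The partial sums `S_n = θ_0 + ⋯ + θ_n` satisfy the three-term recurrence
`(1 + α)(n + 2) S_{n+2} = (2(n + 1) + 2α²) S_{n+1} - (1 - α) n S_n`.
For `0 < α < 1` the invariant `n (1 - α) S_n ≤ n (1 + α) S_{n+1}`, trivial at `n = 0`, propagates
along it: substituting it into the recurrence gives
`(1 + α)(n + 2) S_{n+2} ≥ ((1 - α)(n + 2) + 2α(1 + α)) S_{n+1}`, so `S_{n+1} > 0` yields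
`S_{n+2} > 0` and the invariant at `n + 1`. The induction starts from `S_1 = 2α²θ_0/(1 + α) > 0`.
-/

/-- The sequence `θ_m`. -/
noncomputable def seqTheta (α : ℝ) : ℕ → ℝ
  | 0 => ((α + 1) / (2 * α)) ^ α
  | 1 => (α - 1) * (2 * α + 1) / (α + 1) * seqTheta α 0
  | (m + 2) =>
      2 * α / (((m : ℝ) + 2) * (1 + α)) *
        (((((m : ℝ) + 2) - 1) / α - (1 - α) / (2 * α) * (2 * α + 1)) * seqTheta α (m + 1) +
          (1 - α) / (2 * α) * (3 - ((m : ℝ) + 2)) * seqTheta α m)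

open Finset

theorem pos_of_recurrence_of_one_pos {α : ℝ} (hα : α ∈ Set.Ioo (0 : ℝ) 1) {s : ℕ → ℝ}
    (hrec : ∀ n : ℕ, (1 + α) * ((n : ℝ) + 2) * s (n + 2)
      = (2 * ((n : ℝ) + 1) + 2 * α ^ 2) * s (n + 1) - (1 - α) * n * s n)
    (hs : 0 < s 1) (n : ℕ) : 0 < s (n + 1) := by
  obtain ⟨hα₀, hα₁⟩ := hα
  suffices h : ∀ n : ℕ, 0 < s (n + 1) ∧ (n : ℝ) * ((1 - α) * s n) ≤ n * ((1 + α) * s (n + 1)) from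
    (h n).1
  intro n
  induction n with
  | zero => simpa using hs
  | succ n ih =>
    obtain ⟨hpos, hratio⟩ := ih
    have hα' : 0 < 1 - α := by linarith
    have hn : (0 : ℝ) < n + 2 := by positivity
    have hstep : (n + 2) * ((1 - α) * s (n + 1)) ≤ (n + 2) * ((1 + α) * s (n + 2)) := by
      have hgap : 0 ≤ α * (1 + α) * s (n + 1) := by positivity
      linarith [hrec n]
    have hratio' := le_of_mul_le_mul_left hstep hn
    push_cast
    exact ⟨pos_of_mul_pos_right ((mul_pos hα' hpos).trans_le hratio') (by positivity),
      mul_le_mul_of_nonneg_left hratio' (by positivity)⟩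

section

variable {α : ℝ}

theorem seqTheta_zero_pos (hα : 0 < α) : 0 < seqTheta α 0 :=
  Real.rpow_pos_of_pos (by positivity) α

theorem one_add_mul_seqTheta_one (hα : 1 + α ≠ 0) :
    (1 + α) * seqTheta α 1 = (α - 1) * (2 * α + 1) * seqTheta α 0 := by
  change (1 + α) * ((α - 1) * (2 * α + 1) / (α + 1) * seqTheta α 0) = _
  rw [add_comm α 1]
  field_simp

theorem one_add_mul_seqTheta_add_two (h₀ : α ≠ 0) (h₁ : 1 + α ≠ 0) (m : ℕ) :
    (1 + α) * ((m : ℝ) + 2) * seqTheta α (m + 2)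
      = (2 * ((m : ℝ) + 1) - (1 - α) * (2 * α + 1)) * seqTheta α (m + 1)
        + (1 - α) * (1 - m) * seqTheta α m := by
  rw [seqTheta]
  field_simp
  ring

noncomputable def seqThetaSum (α : ℝ) (n : ℕ) : ℝ := ∑ m ∈ range (n + 1), seqTheta α m

theorem seqThetaSum_succ (n : ℕ) :
    seqThetaSum α (n + 1) = seqThetaSum α n + seqTheta α (n + 1) :=
  sum_range_succ _ _

theorem seqThetaSum_zero : seqThetaSum α 0 = seqTheta α 0 := sum_range_one _

theorem seqThetaSum_one (hα : 1 + α ≠ 0) :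
    seqThetaSum α 1 = 2 * α ^ 2 / (1 + α) * seqTheta α 0 := by
  rw [seqThetaSum_succ, seqThetaSum_zero, div_mul_eq_mul_div, eq_div_iff hα]
  linear_combination one_add_mul_seqTheta_one hα

theorem seqThetaSum_recurrence (h₀ : α ≠ 0) (h₁ : 1 + α ≠ 0) (n : ℕ) :
    (1 + α) * ((n : ℝ) + 2) * seqThetaSum α (n + 2)
      = (2 * ((n : ℝ) + 1) + 2 * α ^ 2) * seqThetaSum α (n + 1)
        - (1 - α) * n * seqThetaSum α n := by
  induction n with
  | zero =>
    have h₂ := one_add_mul_seqTheta_add_two h₀ h₁ 0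
    have h₁' := one_add_mul_seqTheta_one h₁
    rw [seqThetaSum_succ, seqThetaSum_succ, seqThetaSum_zero]
    push_cast at h₂ ⊢
    linear_combination h₂ + h₁'
  | succ n ih =>
    have hθ := one_add_mul_seqTheta_add_two h₀ h₁ (n + 1)
    have e₃ : seqThetaSum α (n + 1 + 2) = seqThetaSum α (n + 1 + 1) + seqTheta α (n + 1 + 2) :=
      seqThetaSum_succ _
    have e₂ : seqThetaSum α (n + 1 + 1) = seqThetaSum α (n + 1) + seqTheta α (n + 1 + 1) :=
      seqThetaSum_succ _
    have e₁ := seqThetaSum_succ (α := α) n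
    push_cast at hθ ⊢
    linear_combination ih + hθ + (1 + α) * ((n : ℝ) + 3) * e₃
      - (2 * ((n : ℝ) + 2) - (1 - α) * (2 * α + 1)) * e₂ + (1 - α) * n * e₁

end

theorem seqTheta_partial_sum_pos (α : ℝ) (hα : α ∈ Set.Ioo (0 : ℝ) 1) :
    ∀ n : ℕ, 0 < ∑ m ∈ Finset.range (n + 1), seqTheta α m := by
  have hα₀ : 0 < α := hα.1
  have h₁ : 1 + α ≠ 0 := by positivity
  have hθ₀ := seqTheta_zero_pos hα₀
  have hS₁ : 0 < seqThetaSum α 1 := by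
    rw [seqThetaSum_one h₁]
    positivity
  rintro (_ | n)
  · simpa using hθ₀
  · exact pos_of_recurrence_of_one_pos hα (seqThetaSum_recurrence hα₀.ne' h₁) hS₁ n
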